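/- For every p ≥ 0 and q ≥ 0, the set-level bijection G^{p+1} × H^{q+1} → (G^p × H^q) × (G × H) sending (g⃗̄, h⃗̄) ↦ (γ_⋊(g⃗̄, h⃗̄), (ḡ_{p+1}, h̄_{q+1})) identifies PG(p) × PH(q) with NG(p) ⋊ NH(q) × (G ⋊ H) equivariantly; in particular γ_⋊ is surjective and its fibers are exactly the orbits of the G ⋊ H action. -/

import Mathlib

/-- The semidirect product multiplication on `G × H`. -/
def sdMul {G : Type*} [Group G] (H : Subgroup G) (a b : G × H) : G × H :=
  (a.1 * (a.2 : G) * b.1 * ((a.2 : G))⁻¹, a.2 * b.2)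

/-- The right action of `G ⋊ H` on `PG(p) × PH(q)`. -/
def sdAct {G : Type*} [Group G] {H : Subgroup G} (p q : ℕ)
    (x : (Fin (p + 1) → G) × (Fin (q + 1) → H)) (a : G × H) :
    (Fin (p + 1) → G) × (Fin (q + 1) → H) :=
  (fun k => ((a.2 : G))⁻¹ * x.1 k * a.1 * (a.2 : G), fun k => x.2 k * a.2)

/-- `γ_⋊ : PG(p) × PH(q) → NG(p) ⋊ NH(q)`. -/
def gammaSemi {G : Type*} [Group G] {H : Subgroup G} (p q : ℕ)
    (x : (Fin (p + 1) → G) × (Fin (q + 1) → H)) : (Fin p → G) × (Fin q → H) :=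
  (fun k => (x.2 (Fin.last q) : G) * (x.1 k.castSucc * (x.1 k.succ)⁻¹) *
      ((x.2 (Fin.last q) : G))⁻¹,
   fun k => x.2 k.castSucc * (x.2 k.succ)⁻¹)

/-- The set-level identification `PG(p) × PH(q) ≃ (NG(p) ⋊ NH(q)) × (G ⋊ H)`:
`(g⃗, h⃗) ↦ (γ_⋊(g⃗, h⃗), (ḡ_{p+1}, h̄_{q+1}))`. -/
def phiTriv {G : Type*} [Group G] {H : Subgroup G} (p q : ℕ)
    (x : (Fin (p + 1) → G) × (Fin (q + 1) → H)) :
    ((Fin p → G) × (Fin q → H)) × (G × H) :=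
  (gammaSemi p q x, (x.1 (Fin.last p), x.2 (Fin.last q)))


/-! Both halves of `phiTriv` are the bijection `x ↦ ((x₀ x₁⁻¹, …, xₙ₋₁ xₙ⁻¹), xₙ)` (a vector is
recovered from its successive quotients and its last entry), followed on the `G`-half by
conjugation with the last `H`-entry, which is undone by conjugating back. The fibres of `γ_⋊` are
orbits because the action can move the last entries `(ḡ_{p+1}, h̄_{q+1})` to any prescribed pair
without changing `γ_⋊`, and then injectivity of `phiTriv` applies. -/

section SuccessiveQuot

variable {M : Type*} [Group M] {n : ℕ}

def successiveQuot (x : Fin (n + 1) → M) : Fin n → M :=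
  fun k => x k.castSucc * (x k.succ)⁻¹

def ofSuccessiveQuot (c : Fin n → M) (m : M) : Fin (n + 1) → M :=
  Fin.reverseInduction (motive := fun _ => M) m (fun k z => c k * z)

@[simp]
theorem ofSuccessiveQuot_last (c : Fin n → M) (m : M) : ofSuccessiveQuot c m (Fin.last n) = m :=
  Fin.reverseInduction_last ..

@[simp]
theorem ofSuccessiveQuot_castSucc (c : Fin n → M) (m : M) (k : Fin n) :
    ofSuccessiveQuot c m k.castSucc = c k * ofSuccessiveQuot c m k.succ :=
  Fin.reverseInduction_castSucc ..

theorem ofSuccessiveQuot_successiveQuot (x : Fin (n + 1) → M) :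
    ofSuccessiveQuot (successiveQuot x) (x (Fin.last n)) = x := by
  funext k
  induction k using Fin.reverseInduction with
  | last => simp
  | cast k ih => simp [ih, successiveQuot]

theorem successiveQuot_ofSuccessiveQuot (c : Fin n → M) (m : M) :
    successiveQuot (ofSuccessiveQuot c m) = c := by
  funext k
  simp [successiveQuot]

variable (M n) in
def successiveQuotEquiv : (Fin (n + 1) → M) ≃ (Fin n → M) × M where
  toFun x := (successiveQuot x, x (Fin.last n))
  invFun y := ofSuccessiveQuot y.1 y.2
  left_inv := ofSuccessiveQuot_successiveQuot
  right_inv y := by simp [successiveQuot_ofSuccessiveQuot]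

end SuccessiveQuot

section Semidirect

variable {G : Type*} [Group G] {H : Subgroup G}

def conjTwistEquiv (p q : ℕ) :
    ((Fin p → G) × G) × ((Fin q → H) × H) ≃ ((Fin p → G) × (Fin q → H)) × (G × H) where
  toFun y := ((fun k => (y.2.2 : G) * y.1.1 k * (y.2.2 : G)⁻¹, y.2.1), (y.1.2, y.2.2))
  invFun z := ((fun k => (z.2.2 : G)⁻¹ * z.1.1 k * (z.2.2 : G), z.2.1), (z.1.2, z.2.2))
  left_inv y := by ext <;> simp [mul_assoc]
  right_inv z := by ext <;> simp [mul_assoc]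

theorem phiTriv_eq_comp (p q : ℕ) :
    phiTriv (G := G) (H := H) p q =
      conjTwistEquiv p q ∘ Equiv.prodCongr (successiveQuotEquiv G p) (successiveQuotEquiv H q) :=
  rfl

theorem bijective_phiTriv (p q : ℕ) : Function.Bijective (phiTriv (G := G) (H := H) p q) := by
  rw [phiTriv_eq_comp]
  exact (conjTwistEquiv p q).bijective.comp (Equiv.bijective _)

theorem gammaSemi_sdAct (p q : ℕ) (x : (Fin (p + 1) → G) × (Fin (q + 1) → H)) (a : G × H) :
    gammaSemi p q (sdAct p q x a) = gammaSemi p q x := by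
  ext k
  · simp only [gammaSemi, sdAct]
    push_cast
    group
  · simp only [gammaSemi, sdAct]
    group

theorem phiTriv_sdAct (p q : ℕ) (x : (Fin (p + 1) → G) × (Fin (q + 1) → H)) (a : G × H) :
    phiTriv p q (sdAct p q x a) =
      (gammaSemi p q x, ((a.2 : G)⁻¹ * x.1 (Fin.last p) * a.1 * a.2, x.2 (Fin.last q) * a.2)) := by
  rw [phiTriv, gammaSemi_sdAct, sdAct]

theorem exists_sdAct_eq_of_gammaSemi_eq {p q : ℕ} {x y : (Fin (p + 1) → G) × (Fin (q + 1) → H)}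
    (hxy : gammaSemi p q x = gammaSemi p q y) : ∃ a : G × H, y = sdAct p q x a := by
  set b : H := (x.2 (Fin.last q))⁻¹ * y.2 (Fin.last q)
  set a : G := (x.1 (Fin.last p))⁻¹ * b * y.1 (Fin.last p) * (b : G)⁻¹
  refine ⟨(a, b), (bijective_phiTriv p q).injective ?_⟩
  rw [phiTriv_sdAct, hxy, phiTriv]
  simp [a, b, mul_assoc]

end Semidirect

/-- the map `x ↦ (γ_⋊ x, (ḡ_{p+1}, h̄_{q+1}))` is a bijection
identifying `PG(p) × PH(q)` with `(NG(p) ⋊ NH(q)) × (G ⋊ H)` equivariantly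
(`γ_⋊` is invariant under the `G ⋊ H`-action); in particular `γ_⋊` is surjective
and its fibers are exactly the orbits of the `G ⋊ H`-action. -/
theorem phiTriv_bijective {G : Type*} [Group G] {H : Subgroup G} (p q : ℕ) :
    Function.Bijective (phiTriv (G := G) (H := H) p q) ∧
    (∀ (x : (Fin (p + 1) → G) × (Fin (q + 1) → H)) (a : G × H),
      gammaSemi p q (sdAct p q x a) = gammaSemi p q x) ∧
    Function.Surjective (gammaSemi (G := G) (H := H) p q) ∧
    (∀ x y : (Fin (p + 1) → G) × (Fin (q + 1) → H),
      gammaSemi p q x = gammaSemi p q y ↔ ∃ a : G × H, y = sdAct p q x a) := by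
  refine ⟨bijective_phiTriv p q, gammaSemi_sdAct p q, fun c => ?_, fun x y => ?_⟩
  · obtain ⟨x, hx⟩ := (bijective_phiTriv p q).surjective (c, 1)
    exact ⟨x, congrArg Prod.fst hx⟩
  · refine ⟨exists_sdAct_eq_of_gammaSemi_eq, ?_⟩
    rintro ⟨a, rfl⟩
    exact (gammaSemi_sdAct p q x a).symm
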